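/- arXiv:2505.21990 — 2 statements merged into one kernel-verified Lean document; each statement's English description precedes it below -/
import Mathlib

section
/- Let P ∈ ℂ^{2×2}, f(θ) = (1/√2)·[1, e^{jθ}]ᵀ, g(φ) = [1, e^{jφ}]ᵀ, and define γ(θ, φ) = |g(φ)ᴴ P f(θ)|². Fix any (θ, φ) ∈ ℝ² and perform one iteration of the alternating updates: first set φ' = arg([P f(θ) f(θ)ᴴ Pᴴ]₂₁), then set θ' = arg([Pᴴ g(φ') g(φ')ᴴ P]₂₁). Then γ(θ', φ') ≥ γ(θ, φ); i.e., each iteration of the alternating phase-shift optimization is non-decreasing in the receive SNR. -/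
open Complex Matrix

/-- The transmit polarforming vector f(θ) = (1/√2)·[1, e^{jθ}]ᵀ. -/
noncomputable def fvec (θ : ℝ) : Fin 2 → ℂ :=
  (1 / Real.sqrt 2 : ℝ) • ![1, Complex.exp (θ * Complex.I)]

/-- The receive polarforming vector g(φ) = [1, e^{jφ}]ᵀ. -/
noncomputable def gvec (φ : ℝ) : Fin 2 → ℂ := ![1, Complex.exp (φ * Complex.I)]

/-- The squared channel gain γ(θ,φ) = |g(φ)ᴴ P f(θ)|². -/
noncomputable def gain (P : Matrix (Fin 2) (Fin 2) ℂ) (θ φ : ℝ) : ℝ :=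
  ‖(star (gvec φ)) ⬝ᵥ (P *ᵥ fvec θ)‖ ^ 2

lemma exp_neg_arg (w : ℂ) :
    Complex.exp (-((w.arg : ℂ)) * Complex.I)
      = Complex.exp ((((starRingEnd ℂ) w).arg : ℂ) * Complex.I) := by
  rw [Complex.arg_conj]
  split_ifs with h
  · rw [h]
    rw [show -((Real.pi : ℂ)) * Complex.I = -((Real.pi : ℂ) * Complex.I) by ring,
      Complex.exp_neg, Complex.exp_pi_mul_I]
    norm_num
  · push_cast; ring_nf

-- dot product expansion for general φ, θ
lemma dot_expand (P : Matrix (Fin 2) (Fin 2) ℂ) (θ φ : ℝ) :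
    (star (gvec φ)) ⬝ᵥ (P *ᵥ fvec θ)
      = (P *ᵥ fvec θ) 0 + Complex.exp (-(φ:ℂ) * Complex.I) * (P *ᵥ fvec θ) 1 := by
  have : (starRingEnd ℂ) (Complex.exp ((φ:ℂ) * Complex.I)) = Complex.exp (-(φ:ℂ) * Complex.I) := by
    rw [← Complex.exp_conj]
    congr 1
    simp [Complex.conj_I]
  simp [gvec, dotProduct, Fin.sum_univ_two, Pi.star_apply, this]

lemma dot_expand2 (P : Matrix (Fin 2) (Fin 2) ℂ) (θ φ : ℝ) :
    (star (gvec φ)) ⬝ᵥ (P *ᵥ fvec θ)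
      = ((1 / Real.sqrt 2 : ℝ) : ℂ) *
        ((starRingEnd ℂ) ((Pᴴ *ᵥ gvec φ) 0)
          + Complex.exp ((θ:ℂ) * Complex.I) * (starRingEnd ℂ) ((Pᴴ *ᵥ gvec φ) 1)) := by
  have h : (star (gvec φ)) ⬝ᵥ (P *ᵥ fvec θ) = (star (Pᴴ *ᵥ gvec φ)) ⬝ᵥ fvec θ := by
    rw [Matrix.star_mulVec, Matrix.conjTranspose_conjTranspose, Matrix.dotProduct_mulVec]
  rw [h]
  simp [fvec, dotProduct, Fin.sum_univ_two, Pi.star_apply]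
  ring



lemma key_align (a b : ℂ) :
    ‖a + Complex.exp (((a * (starRingEnd ℂ) b).arg : ℂ) * Complex.I) * b‖
      = ‖a‖ + ‖b‖ := by
  rcases eq_or_ne b 0 with hb | hb
  · simp [hb]
  rcases eq_or_ne a 0 with ha | ha
  · simp [ha]
  have hb' : (‖b‖ : ℂ) ≠ 0 := by simpa using hb
  have ha' : (‖a‖ : ℂ) ≠ 0 := by simpa using ha
  have hab : a * (starRingEnd ℂ) b ≠ 0 := by simp [ha, hb]
  have h1 : Complex.exp (((a * (starRingEnd ℂ) b).arg : ℂ) * Complex.I)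
      = (a * (starRingEnd ℂ) b) / (‖a * (starRingEnd ℂ) b‖) := by
    rw [eq_div_iff (by simpa using hab), mul_comm]
    exact Complex.norm_mul_exp_arg_mul_I _
  have hcb : (starRingEnd ℂ) b * b = ((‖b‖ : ℝ) : ℂ)^2 := by
    rw [mul_comm, Complex.mul_conj]
    push_cast [Complex.normSq_eq_norm_sq]
    ring
  have h2 : Complex.exp (((a * (starRingEnd ℂ) b).arg : ℂ) * Complex.I) * b
      = a * ((‖b‖ / ‖a‖ : ℝ) : ℂ) := by
    rw [h1, norm_mul, Complex.norm_conj]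
    push_cast
    field_simp
    linear_combination hcb
  rw [h2]
  have hnn : (0:ℝ) ≤ 1 + ‖b‖ / ‖a‖ := by positivity
  calc ‖a + a * ((‖b‖ / ‖a‖ : ℝ) : ℂ)‖
      = ‖a * (((1 + ‖b‖ / ‖a‖ : ℝ)) : ℂ)‖ := by
        push_cast; ring_nf
    _ = ‖a‖ * (1 + ‖b‖ / ‖a‖) := by
        rw [norm_mul, Complex.norm_real, Real.norm_eq_abs, _root_.abs_of_nonneg hnn]
    _ = ‖a‖ + ‖b‖ := by
        rw [mul_add, mul_one, mul_div_cancel₀ _ (norm_ne_zero_iff.mpr ha)]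


/-- One iteration of the alternating phase-shift updates is non-decreasing in
    the receive SNR. -/
theorem stmt8 (P : Matrix (Fin 2) (Fin 2) ℂ) (θ φ : ℝ)
    (φ' θ' : ℝ)
    (hφ' : φ' = Complex.arg ((vecMulVec (P *ᵥ fvec θ) (star (P *ᵥ fvec θ))) 1 0))
    (hθ' : θ' = Complex.arg ((vecMulVec (Pᴴ *ᵥ gvec φ') (star (Pᴴ *ᵥ gvec φ'))) 1 0)) :
    gain P θ φ ≤ gain P θ' φ' := by
  set u : Fin 2 → ℂ := P *ᵥ fvec θ with hu
  set v : Fin 2 → ℂ := Pᴴ *ᵥ gvec φ' with hv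
  have hφ'' : φ' = (u 1 * (starRingEnd ℂ) (u 0)).arg := by
    rw [hφ', Matrix.vecMulVec_apply]; rfl
  have hθ'' : θ' = (v 1 * (starRingEnd ℂ) (v 0)).arg := by
    rw [hθ', Matrix.vecMulVec_apply]; rfl
  -- the value at (θ, φ') is maximal over φ
  have habs1 : ‖(star (gvec φ')) ⬝ᵥ (P *ᵥ fvec θ)‖
      = ‖u 0‖ + ‖u 1‖ := by
    rw [dot_expand, ← hu, hφ'']
    rw [show (-(((u 1 * (starRingEnd ℂ) (u 0)).arg : ℝ) : ℂ))
        = -(((u 1 * (starRingEnd ℂ) (u 0)).arg : ℂ)) by ring]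
    rw [exp_neg_arg]
    rw [show (starRingEnd ℂ) (u 1 * (starRingEnd ℂ) (u 0)) = u 0 * (starRingEnd ℂ) (u 1) by
      rw [_root_.map_mul, Complex.conj_conj]; ring]
    exact key_align (u 0) (u 1)
  have hle1 : ‖(star (gvec φ)) ⬝ᵥ (P *ᵥ fvec θ)‖
      ≤ ‖(star (gvec φ')) ⬝ᵥ (P *ᵥ fvec θ)‖ := by
    rw [habs1, dot_expand, ← hu]
    calc ‖u 0 + Complex.exp (-(φ:ℂ) * Complex.I) * u 1‖
        ≤ ‖u 0‖ + ‖Complex.exp (-(φ:ℂ) * Complex.I) * u 1‖ :=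
          norm_add_le _ _
      _ = ‖u 0‖ + ‖u 1‖ := by
          rw [norm_mul, show (-(φ:ℂ)) = (((-φ : ℝ)) : ℂ) by push_cast; ring,
            Complex.norm_exp_ofReal_mul_I, one_mul]
  -- the value at (θ', φ') is maximal over θ
  have habs2 : ‖(star (gvec φ')) ⬝ᵥ (P *ᵥ fvec θ')‖
      = |1 / Real.sqrt 2| * (‖v 0‖ + ‖v 1‖) := by
    rw [dot_expand2, ← hv, hθ'']
    rw [norm_mul, Complex.norm_real, Real.norm_eq_abs]
    congr 1
    rw [show (v 1 * (starRingEnd ℂ) (v 0)).arg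
        = ((starRingEnd ℂ) (v 0) * (starRingEnd ℂ) ((starRingEnd ℂ) (v 1))).arg by
      rw [Complex.conj_conj]; ring_nf]
    rw [key_align ((starRingEnd ℂ) (v 0)) ((starRingEnd ℂ) (v 1)),
      Complex.norm_conj, Complex.norm_conj]
  have hle2 : ‖(star (gvec φ')) ⬝ᵥ (P *ᵥ fvec θ)‖
      ≤ ‖(star (gvec φ')) ⬝ᵥ (P *ᵥ fvec θ')‖ := by
    rw [habs2, dot_expand2, ← hv, norm_mul, Complex.norm_real, Real.norm_eq_abs]
    apply mul_le_mul_of_nonneg_left _ (abs_nonneg _)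
    calc ‖(starRingEnd ℂ) (v 0) + Complex.exp ((θ:ℂ) * Complex.I) * (starRingEnd ℂ) (v 1)‖
        ≤ ‖(starRingEnd ℂ) (v 0)‖
            + ‖Complex.exp ((θ:ℂ) * Complex.I) * (starRingEnd ℂ) (v 1)‖ :=
          norm_add_le _ _
      _ = ‖v 0‖ + ‖v 1‖ := by
          rw [norm_mul, Complex.norm_exp_ofReal_mul_I, one_mul, Complex.norm_conj, Complex.norm_conj]
  have := hle1.trans hle2
  unfold gain
  exact pow_le_pow_left₀ (norm_nonneg _) this 2
end

section
/- Let P ∈ ℂ^{2×2} and define γ(θ, φ) = |g(φ)ᴴ P f(θ)|² with f(θ) = (1/√2)·[1, e^{jθ}]ᵀ and g(φ) = [1, e^{jφ}]ᵀ. Let (θ₀, φ₀) ∈ ℝ² be arbitrary and define the sequence (θ_i, φ_i) by the alternating updates φ_{i+1} = arg([P f(θ_i) f(θ_i)ᴴ Pᴴ]₂₁) and θ_{i+1} = arg([Pᴴ g(φ_{i+1}) g(φ_{i+1})ᴴ P]₂₁). Then the real sequence γ(θ_i, φ_i) is monotonically non-decreasing and bounded above, hence convergent. -/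
open Complex Matrix Filter

lemma exp_neg_arg_mul (z : ℂ) :
    Complex.exp (-(Complex.arg z : ℝ) * Complex.I) * z = ‖z‖ := by
  nth_rewrite 2 [← Complex.norm_mul_exp_arg_mul_I z]
  rw [← mul_assoc, mul_comm, ← mul_assoc, ← Complex.exp_add]
  ring_nf
  simp

lemma keyEq (a b : ℂ) :
    ‖a + Complex.exp (-(Complex.arg (b * (starRingEnd ℂ) a) : ℝ) * Complex.I) * b‖
      = ‖a‖ + ‖b‖ := by
  rcases eq_or_ne a 0 with ha | ha
  · simp [ha]
  set c := Complex.exp (-(Complex.arg (b * (starRingEnd ℂ) a) : ℝ) * Complex.I) with hc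
  have h1 : c * (b * (starRingEnd ℂ) a) = ‖b * (starRingEnd ℂ) a‖ :=
    exp_neg_arg_mul _
  have ha2 : (starRingEnd ℂ) a * a = (Complex.normSq a : ℂ) := by
    rw [mul_comm]; exact Complex.mul_conj a
  have h2 : (starRingEnd ℂ) a * (a + c * b)
      = ((Complex.normSq a : ℝ) : ℂ) + ((‖b * (starRingEnd ℂ) a‖ : ℝ) : ℂ) := by
    rw [mul_add, ha2, mul_comm ((starRingEnd ℂ) a) (c * b), mul_assoc, h1]
  have h4 := congrArg (‖·‖) h2
  rw [norm_mul, Complex.norm_conj, ← Complex.ofReal_add, Complex.norm_real,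
    Real.norm_of_nonneg (add_nonneg (Complex.normSq_nonneg a) (norm_nonneg _)),
    norm_mul, Complex.norm_conj, ← Complex.sq_norm] at h4
  have hane : ‖a‖ ≠ 0 := by simpa using ha
  apply mul_left_cancel₀ hane
  rw [h4]; ring

lemma keyLe (a b : ℂ) (ψ : ℝ) :
    ‖a + Complex.exp (-(ψ:ℂ) * Complex.I) * b‖
      ≤ ‖a‖ + ‖b‖ := by
  refine (norm_add_le _ _).trans ?_
  rw [norm_mul]
  simp [Complex.norm_exp]

lemma conj_exp_mul_I (x : ℝ) :
    (starRingEnd ℂ) (Complex.exp ((x:ℂ) * Complex.I)) = Complex.exp (-(x:ℂ) * Complex.I) := by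
  rw [← Complex.exp_conj]
  simp [Complex.conj_I]

lemma conj_exp_neg_mul_I (x : ℝ) :
    (starRingEnd ℂ) (Complex.exp (-((x:ℂ) * Complex.I))) = Complex.exp ((x:ℂ) * Complex.I) := by
  rw [← Complex.exp_conj]
  simp [Complex.conj_I]

lemma gain_rx (P : Matrix (Fin 2) (Fin 2) ℂ) (θ φ : ℝ) :
    gain P θ φ = ‖(P *ᵥ fvec θ) 0
      + Complex.exp (-(φ:ℂ) * Complex.I) * (P *ᵥ fvec θ) 1‖ ^ 2 := by
  unfold gain
  congr 2
  simp [gvec, dotProduct, Fin.sum_univ_two, Pi.star_apply, RCLike.star_def, conj_exp_mul_I]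

lemma gain_tx (P : Matrix (Fin 2) (Fin 2) ℂ) (θ φ : ℝ) :
    gain P θ φ = (1/2) * ‖(Pᴴ *ᵥ gvec φ) 0
      + Complex.exp (-(θ:ℂ) * Complex.I) * (Pᴴ *ᵥ gvec φ) 1‖ ^ 2 := by
  unfold gain
  have key : star (gvec φ) ⬝ᵥ (P *ᵥ fvec θ)
      = (starRingEnd ℂ) (((1 / Real.sqrt 2 : ℝ):ℂ) * ((Pᴴ *ᵥ gvec φ) 0
        + Complex.exp (-(θ:ℂ) * Complex.I) * (Pᴴ *ᵥ gvec φ) 1)) := by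
    simp [fvec, gvec, dotProduct, mulVec, Fin.sum_univ_two, conjTranspose_apply,
      map_add, _root_.map_mul, Complex.conj_ofReal, conj_exp_mul_I, conj_exp_neg_mul_I,
      Pi.star_apply, RCLike.star_def, Complex.smul_re]
    ring_nf
  rw [key, Complex.norm_conj, norm_mul, Complex.norm_real,
    Real.norm_of_nonneg (by positivity), mul_pow]
  rw [div_pow, one_pow, Real.sq_sqrt (by norm_num)]

lemma rx_le (P : Matrix (Fin 2) (Fin 2) ℂ) (θ ψ : ℝ) :
    gain P θ ψ ≤ gain P θ
      (Complex.arg ((P *ᵥ fvec θ) 1 * (starRingEnd ℂ) ((P *ᵥ fvec θ) 0))) := by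
  rw [gain_rx, gain_rx]
  have h1 := keyLe ((P *ᵥ fvec θ) 0) ((P *ᵥ fvec θ) 1) ψ
  have h2 := keyEq ((P *ᵥ fvec θ) 0) ((P *ᵥ fvec θ) 1)
  rw [← h2] at h1
  exact pow_le_pow_left₀ (norm_nonneg _) h1 2

lemma tx_le (P : Matrix (Fin 2) (Fin 2) ℂ) (ψ φ : ℝ) :
    gain P ψ φ ≤ gain P
      (Complex.arg ((Pᴴ *ᵥ gvec φ) 1 * (starRingEnd ℂ) ((Pᴴ *ᵥ gvec φ) 0))) φ := by
  rw [gain_tx, gain_tx]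
  have h1 := keyLe ((Pᴴ *ᵥ gvec φ) 0) ((Pᴴ *ᵥ gvec φ) 1) ψ
  have h2 := keyEq ((Pᴴ *ᵥ gvec φ) 0) ((Pᴴ *ᵥ gvec φ) 1)
  rw [← h2] at h1
  have := pow_le_pow_left₀ (norm_nonneg _) h1 2
  linarith

lemma entry_bd (P : Matrix (Fin 2) (Fin 2) ℂ) (θ : ℝ) (k : Fin 2) :
    ‖(P *ᵥ fvec θ) k‖ ≤ ‖P k 0‖ + ‖P k 1‖ := by
  have hs : (0:ℝ) ≤ 1 / Real.sqrt 2 := by positivity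
  have hs1 : 1 / Real.sqrt 2 ≤ 1 := by
    rw [div_le_one (by positivity)]
    nlinarith [Real.sq_sqrt (by norm_num : (0:ℝ) ≤ 2), Real.sqrt_nonneg 2]
  have h : (P *ᵥ fvec θ) k = P k 0 * (((1 / Real.sqrt 2 : ℝ):ℂ) * 1)
      + P k 1 * (((1 / Real.sqrt 2 : ℝ):ℂ) * Complex.exp ((θ:ℂ) * Complex.I)) := by
    simp [mulVec, fvec, dotProduct, Fin.sum_univ_two, Complex.real_smul]
  rw [h]
  refine (norm_add_le _ _).trans ?_
  simp only [norm_mul, Complex.norm_real, Real.norm_of_nonneg hs, norm_one,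
    Complex.norm_exp_ofReal_mul_I, mul_one]
  have h0 := norm_nonneg (P k 0)
  have h1 := norm_nonneg (P k 1)
  nlinarith

lemma gain_bd (P : Matrix (Fin 2) (Fin 2) ℂ) (θ φ : ℝ) :
    gain P θ φ ≤ (‖P 0 0‖ + ‖P 0 1‖
      + ‖P 1 0‖ + ‖P 1 1‖) ^ 2 := by
  rw [gain_rx]
  have h1 := keyLe ((P *ᵥ fvec θ) 0) ((P *ᵥ fvec θ) 1) φ
  have h2 := entry_bd P θ 0
  have h3 := entry_bd P θ 1
  have h4 : ‖(P *ᵥ fvec θ) 0 + Complex.exp (-(φ:ℂ) * Complex.I) * (P *ᵥ fvec θ) 1‖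
      ≤ ‖P 0 0‖ + ‖P 0 1‖ + ‖P 1 0‖ + ‖P 1 1‖ := by
    refine h1.trans ?_
    linarith
  exact pow_le_pow_left₀ (norm_nonneg _) h4 2

lemma vmv_entry (a : Fin 2 → ℂ) :
    (vecMulVec a (star a)) 1 0 = a 1 * (starRingEnd ℂ) (a 0) := by
  simp [vecMulVec_apply, RCLike.star_def]

/-- The sequence of SNR values produced by the alternating phase-shift updates
    is monotonically non-decreasing and bounded above, hence convergent. -/
theorem stmt9 (P : Matrix (Fin 2) (Fin 2) ℂ) (θ φ : ℕ → ℝ)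
    (hφ : ∀ i : ℕ, φ (i + 1) =
      Complex.arg ((vecMulVec (P *ᵥ fvec (θ i)) (star (P *ᵥ fvec (θ i)))) 1 0))
    (hθ : ∀ i : ℕ, θ (i + 1) =
      Complex.arg ((vecMulVec (Pᴴ *ᵥ gvec (φ (i + 1)))
        (star (Pᴴ *ᵥ gvec (φ (i + 1))))) 1 0)) :
    Monotone (fun i => gain P (θ i) (φ i)) ∧
      BddAbove (Set.range fun i => gain P (θ i) (φ i)) ∧
      ∃ L : ℝ, Tendsto (fun i => gain P (θ i) (φ i)) atTop (nhds L) := by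
  have hmono : Monotone (fun i => gain P (θ i) (φ i)) := by
    apply monotone_nat_of_le_succ
    intro i
    calc gain P (θ i) (φ i) ≤ gain P (θ i) (φ (i+1)) := by
          rw [hφ i, vmv_entry]; exact rx_le P (θ i) (φ i)
      _ ≤ gain P (θ (i+1)) (φ (i+1)) := by
          rw [hθ i, vmv_entry]; exact tx_le P (θ i) (φ (i+1))
  have hbdd : BddAbove (Set.range fun i => gain P (θ i) (φ i)) := by
    refine ⟨(‖P 0 0‖ + ‖P 0 1‖
      + ‖P 1 0‖ + ‖P 1 1‖) ^ 2, ?_⟩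
    rintro x ⟨i, rfl⟩
    exact gain_bd P (θ i) (φ i)
  exact ⟨hmono, hbdd, ⟨_, tendsto_atTop_ciSup hmono hbdd⟩⟩
end
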